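/- With F = FreeGroup (Fin 7) and B as above: for k = (k₁,k₂,k₃,k₄) ∈ ℤ⁴ write u_k = x₁^{k₁} x₂^{k₂} x₃^{k₃} x₄^{k₄}, and for 1 ≤ j ≤ 7 let e(j) ∈ {1,2,3,4} be 1 if j = 1, 2 if j ∈ {2,7}, 3 if j ∈ {3,6}, and 4 if j ∈ {4,5}. Then B is generated by the set { u_k · x_j · u_{k + δ_{e(j)}}⁻¹ : k ∈ ℤ⁴, 1 ≤ j ≤ 7 }, where δ_m ∈ ℤ⁴ increments the m-th coordinate by 1; i.e., the Subgroup.closure of this set equals B. -/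

import Mathlib

/-- The exponent-sum homomorphism of the free group `F = FreeGroup (Fin 7)` for the `i`-th
generator (0-based `i`; `σᵢ` of the paper is `expSum (i-1)`), valued in `Multiplicative ℤ`. -/
def expSum (i : Fin 7) : FreeGroup (Fin 7) →* Multiplicative ℤ :=
  FreeGroup.lift fun j => Multiplicative.ofAdd (if j = i then (1 : ℤ) else 0)

/-- The exponent sum `σ_{i+1}(w)` as an integer (`i` is 0-based). -/
def sgm (i : Fin 7) (w : FreeGroup (Fin 7)) : ℤ := Multiplicative.toAdd (expSum i w)

lemma sgm_one (i : Fin 7) : sgm i 1 = 0 := by simp [sgm]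

lemma sgm_mul (i : Fin 7) (a b : FreeGroup (Fin 7)) :
    sgm i (a * b) = sgm i a + sgm i b := by simp [sgm, map_mul]

lemma sgm_inv (i : Fin 7) (a : FreeGroup (Fin 7)) : sgm i a⁻¹ = -sgm i a := by
  simp [sgm, map_inv]

/-- The subgroup `B = {w : σ₁(w) = 0, σ₂(w)+σ₇(w) = 0, σ₃(w)+σ₆(w) = 0, σ₄(w)+σ₅(w) = 0}`
of `FreeGroup (Fin 7)`, i.e. the Brunnian twin group `Brun(T₄)` inside `PT₄`. -/
def B : Subgroup (FreeGroup (Fin 7)) where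
  carrier := {w | sgm 0 w = 0 ∧ sgm 1 w + sgm 6 w = 0 ∧ sgm 2 w + sgm 5 w = 0 ∧
    sgm 3 w + sgm 4 w = 0}
  one_mem' := by simp [Set.mem_setOf_eq, sgm_one]
  mul_mem' := by
    intro a b ha hb
    simp only [Set.mem_setOf_eq, sgm_mul] at *
    omega
  inv_mem' := by
    intro a ha
    simp only [Set.mem_setOf_eq, sgm_inv] at *
    omega

/-- The Schreier representative `u_k = x₁^{k₁} x₂^{k₂} x₃^{k₃} x₄^{k₄}`. -/
def uElt (k : Fin 4 → ℤ) : FreeGroup (Fin 7) :=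
  FreeGroup.of 0 ^ k 0 * FreeGroup.of 1 ^ k 1 * FreeGroup.of 2 ^ k 2 * FreeGroup.of 3 ^ k 3

/-- `e(j)`: the map sending a free generator `x_{j+1}` (0-based `j`) to `1,2,3,4` (0-based
`0,1,2,3`) according to `1 ↦ 1`, `{2,7} ↦ 2`, `{3,6} ↦ 3`, `{4,5} ↦ 4`. -/
def emap : Fin 7 → Fin 4 := ![0, 1, 2, 3, 3, 2, 1]

lemma sgm_of (i j : Fin 7) : sgm i (FreeGroup.of j) = if j = i then 1 else 0 := by
  simp [sgm, expSum]

lemma sgm_zpow (i : Fin 7) (a : FreeGroup (Fin 7)) (n : ℤ) :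
    sgm i (a ^ n) = n * sgm i a := by
  simp [sgm, map_zpow, Int.toAdd_zpow, mul_comm]

/-- The "defect" vector: `w ∈ B` iff `dd w = 0`. -/
def dd (w : FreeGroup (Fin 7)) : Fin 4 → ℤ :=
  ![sgm 0 w, sgm 1 w + sgm 6 w, sgm 2 w + sgm 5 w, sgm 3 w + sgm 4 w]

lemma dd_one : dd 1 = 0 := by
  funext m; fin_cases m <;> simp [dd, sgm_one]

lemma dd_mul (a b : FreeGroup (Fin 7)) : dd (a * b) = dd a + dd b := by
  funext m; fin_cases m <;> simp [dd, sgm_mul] <;> ring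

lemma dd_inv (a : FreeGroup (Fin 7)) : dd a⁻¹ = -dd a := by
  funext m; fin_cases m <;> simp [dd, sgm_inv] <;> ring

lemma dd_of (j : Fin 7) : dd (FreeGroup.of j) = Pi.single (emap j) 1 := by
  fin_cases j <;> (funext m; fin_cases m) <;>
    simp [dd, sgm_of, emap, Pi.single_apply] <;> decide

lemma dd_uElt (k : Fin 4 → ℤ) : dd (uElt k) = k := by
  funext m
  fin_cases m <;> simp [dd, uElt, sgm_mul, sgm_zpow, sgm_of]

lemma mem_B_iff (w : FreeGroup (Fin 7)) : w ∈ B ↔ dd w = 0 := by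
  constructor
  · rintro ⟨h0, h1, h2, h3⟩
    funext m; fin_cases m <;> simpa [dd]
  · intro h
    have hm := fun m => congrFun h m
    exact ⟨by simpa [dd] using hm 0, by simpa [dd] using hm 1,
      by simpa [dd] using hm 2, by simpa [dd] using hm 3⟩

/-- `B` is generated by the Reidemeister–Schreier elements
`u_k · x_j · u_{k + δ_{e(j)}}⁻¹` for `k ∈ ℤ⁴`, `1 ≤ j ≤ 7`. -/
theorem B_eq_closure_schreier_generators :
    Subgroup.closure
      {g : FreeGroup (Fin 7) | ∃ (k : Fin 4 → ℤ) (j : Fin 7),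
        g = uElt k * FreeGroup.of j * (uElt (k + Pi.single (emap j) 1))⁻¹} = B := by
  set S : Set (FreeGroup (Fin 7)) :=
    {g : FreeGroup (Fin 7) | ∃ (k : Fin 4 → ℤ) (j : Fin 7),
      g = uElt k * FreeGroup.of j * (uElt (k + Pi.single (emap j) 1))⁻¹} with hS
  apply le_antisymm
  · rw [Subgroup.closure_le]
    rintro g ⟨k, j, rfl⟩
    rw [SetLike.mem_coe, mem_B_iff, dd_mul, dd_mul, dd_inv, dd_uElt, dd_uElt, dd_of]
    abel
  · -- key: ∀ w k, uElt k * w * (uElt (k + dd w))⁻¹ ∈ closure S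
    have key : ∀ w : FreeGroup (Fin 7), ∀ k : Fin 4 → ℤ,
        uElt k * w * (uElt (k + dd w))⁻¹ ∈ Subgroup.closure S := by
      intro w
      induction w using FreeGroup.induction_on with
      | C1 =>
        intro k
        simpa [dd_one] using Subgroup.one_mem (Subgroup.closure S)
      | of j =>
        intro k
        show uElt k * FreeGroup.of j * (uElt (k + dd (FreeGroup.of j)))⁻¹ ∈ _
        rw [dd_of]
        exact Subgroup.subset_closure ⟨k, j, rfl⟩
      | inv_of j ih =>
        intro k
        have ih' : ∀ k', uElt k' * FreeGroup.of j *
            (uElt (k' + dd (FreeGroup.of j)))⁻¹ ∈ Subgroup.closure S := ih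
        show uElt k * (FreeGroup.of j)⁻¹ * (uElt (k + dd (FreeGroup.of j)⁻¹))⁻¹ ∈ _
        have h := Subgroup.inv_mem _ (ih' (k + dd (FreeGroup.of j)⁻¹))
        have e1 : k + dd (FreeGroup.of j)⁻¹ + dd (FreeGroup.of j) = k := by
          rw [dd_inv]; abel
        rw [e1] at h
        have e2 : uElt k * (FreeGroup.of j)⁻¹ * (uElt (k + dd (FreeGroup.of j)⁻¹))⁻¹ =
            (uElt (k + dd (FreeGroup.of j)⁻¹) * FreeGroup.of j * (uElt k)⁻¹)⁻¹ := by
          group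
        rw [e2]
        exact h
      | mul a b iha ihb =>
        intro k
        have h := Subgroup.mul_mem _ (iha k) (ihb (k + dd a))
        have e1 : k + dd a + dd b = k + dd (a * b) := by rw [dd_mul]; abel
        rw [e1] at h
        have e2 : uElt k * (a * b) * (uElt (k + dd (a * b)))⁻¹ =
            (uElt k * a * (uElt (k + dd a))⁻¹) *
            (uElt (k + dd a) * b * (uElt (k + dd (a * b)))⁻¹) := by
          group
        rw [e2]
        exact h
    intro w hw
    have h0 : dd w = 0 := (mem_B_iff w).mp hw
    have := key w 0
    rw [h0, add_zero] at this
    have hu : uElt 0 = 1 := by simp [uElt]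
    simpa [hu] using this
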